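/- arXiv:1205.3605 — 3 statements merged into one kernel-verified Lean document; each statement's English description precedes it below -/
import Mathlib

section
/- For every finite tree S with nonnegative edge costs, the cost and the power of S satisfy c(S) ≤ p(S) ≤ 2·c(S). -/
open scoped NNReal

/-- The power of a vertex `v` w.r.t. an edge set `E` with costs `c`: the maximum cost of an
edge of `E` incident to `v` (`0` if `v` has no incident edge, since `sSup ∅ = 0` in `ℝ≥0`). -/
noncomputable def vertexPower {V : Type*} (c : Sym2 V → ℝ≥0) (E : Set (Sym2 V)) (v : V) : ℝ≥0 :=
  sSup (c '' {f | f ∈ E ∧ v ∈ f})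

/-- The power of an edge set `E`: the sum of the powers of all vertices (vertices not
touched by `E` contribute `0`). -/
noncomputable def setPower {V : Type*} (c : Sym2 V → ℝ≥0) (E : Set (Sym2 V)) : ℝ≥0 :=
  ∑ᶠ v : V, vertexPower c E v

/-- The cost of an edge set `E`: the sum of the costs of its edges. -/
noncomputable def setCost {V : Type*} (c : Sym2 V → ℝ≥0) (E : Set (Sym2 V)) : ℝ≥0 :=
  ∑ᶠ f ∈ E, c f

/-!
Bounding the power of each vertex by the total cost of its incident edges counts every edge
once from each endpoint, so `p(S) ≤ 2 c(S)`. Conversely, root the tree at `r` and send each edge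
to its endpoint farther from `r`. This map is injective, because a vertex has only one neighbour
closer to `r`, and an edge costs at most the power of its image; hence `c(S) ≤ p(S)`.
-/

open Finset

section Power

variable {V : Type*} (c : Sym2 V → ℝ≥0)

lemma le_vertexPower {E : Set (Sym2 V)} (hE : E.Finite) {v : V} {e : Sym2 V} (he : e ∈ E)
    (hv : v ∈ e) : c e ≤ vertexPower c E v :=
  le_csSup ((hE.subset fun _ hf => hf.1).image c).bddAbove ⟨e, ⟨he, hv⟩, rfl⟩

lemma vertexPower_le_sum [DecidableEq V] (E : Finset (Sym2 V)) (v : V) :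
    vertexPower c E v ≤ ∑ e ∈ E with v ∈ e, c e := by
  refine csSup_le' ?_
  rintro _ ⟨e, ⟨he, hv⟩, rfl⟩
  exact single_le_sum (fun _ _ => zero_le) (mem_filter.2 ⟨he, hv⟩)

lemma setCost_coe (E : Finset (Sym2 V)) : setCost c E = ∑ e ∈ E, c e :=
  finsum_mem_coe_finset _ _

lemma setPower_eq_sum [Fintype V] (E : Set (Sym2 V)) :
    setPower c E = ∑ v, vertexPower c E v :=
  finsum_eq_sum_of_fintype _

lemma card_filter_mem_sym2_le_two [Fintype V] [DecidableEq V] (e : Sym2 V) :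
    #{v | v ∈ e} ≤ 2 := by
  induction e with
  | _ a b =>
    calc #{v | v ∈ s(a, b)} = #{a, b} := by congr 1; ext; simp
      _ ≤ 2 := card_le_two

theorem setPower_le_two_mul_setCost [Fintype V] (E : Finset (Sym2 V)) :
    setPower c E ≤ 2 * setCost c E := by
  classical
  calc setPower c E ≤ ∑ v, ∑ e ∈ E with v ∈ e, c e := by
        rw [setPower_eq_sum]; exact sum_le_sum fun v _ => vertexPower_le_sum c E v
    _ = ∑ e ∈ E, ∑ v with v ∈ e, c e := by simp only [sum_filter]; exact sum_comm
    _ = ∑ e ∈ E, #{v | v ∈ e} • c e := by simp only [sum_const]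
    _ ≤ ∑ e ∈ E, 2 • c e := sum_le_sum fun e _ => by gcongr; exact card_filter_mem_sym2_le_two e
    _ = 2 * setCost c E := by rw [setCost_coe, mul_sum]; simp [two_smul, two_mul]

theorem setCost_le_setPower_of_injOn [Fintype V] (E : Finset (Sym2 V)) (φ : Sym2 V → V)
    (hinj : Set.InjOn φ E) (hφ : ∀ e ∈ E, φ e ∈ e) : setCost c E ≤ setPower c E := by
  classical
  calc setCost c E = ∑ e ∈ E, c e := setCost_coe c E
    _ ≤ ∑ e ∈ E, vertexPower c E (φ e) :=
        sum_le_sum fun e he => le_vertexPower c E.finite_toSet he (hφ e he)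
    _ = ∑ v ∈ E.image φ, vertexPower c E v := (sum_image hinj).symm
    _ ≤ setPower c E := by
        rw [setPower_eq_sum]; exact sum_le_sum_of_subset (subset_univ _)

end Power

namespace SimpleGraph

variable {V : Type*} {G : SimpleGraph V}

lemma IsAcyclic.eq_of_adj_of_dist_eq_add_one (hG : G.IsAcyclic) {r v w w' : V}
    (hr : G.Reachable r w) (hw : G.Adj w v) (hw' : G.Adj w' v)
    (h : G.dist r v = G.dist r w + 1) (h' : G.dist r v = G.dist r w' + 1) : w = w' := by
  have hr' : G.Reachable r w' := (hr.trans hw.reachable).trans hw'.symm.reachable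
  obtain ⟨p, hp⟩ := hr.exists_walk_length_eq_dist
  obtain ⟨p', hp'⟩ := hr'.exists_walk_length_eq_dist
  have hq : (p.concat hw).IsPath := Walk.isPath_of_length_eq_dist _ (by simp [hp, h])
  have hq' : (p'.concat hw').IsPath := Walk.isPath_of_length_eq_dist _ (by simp [hp', h'])
  have heq := congrArg Subtype.val <| (hG.subsingleton_path r v).elim ⟨_, hq⟩ ⟨_, hq'⟩
  exact (Walk.concat_inj heq).1

lemma IsTree.exists_injOn_mem_edgeSet (hG : G.IsTree) :
    ∃ φ : Sym2 V → V, Set.InjOn φ G.edgeSet ∧ ∀ e ∈ G.edgeSet, φ e ∈ e := by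
  obtain ⟨r⟩ := hG.connected.nonempty
  have hfar : ∀ e, ∃ v, e ∈ G.edgeSet → ∃ w, e = s(v, w) ∧ G.dist r v = G.dist r w + 1 := by
    refine Sym2.ind fun a b => ?_
    by_cases hab : G.Adj a b
    · rcases hG.dist_eq_dist_add_one_of_adj r hab with h | h
      · exact ⟨a, fun _ => ⟨b, rfl, h⟩⟩
      · exact ⟨b, fun _ => ⟨a, Sym2.eq_swap, h⟩⟩
    · exact ⟨a, fun he => (hab he).elim⟩
  choose φ hφ using hfar
  refine ⟨φ, fun e he e' he' hφe => ?_, fun e he => ?_⟩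
  · obtain ⟨w, hew, hw⟩ := hφ e he
    obtain ⟨w', hew', hw'⟩ := hφ e' he'
    have hadj : G.Adj (φ e) w := by rwa [hew] at he
    have hadj' : G.Adj (φ e) w' := by rwa [hew', ← hφe] at he'
    rw [hew, hew', ← hφe, hG.isAcyclic.eq_of_adj_of_dist_eq_add_one (hG.connected r w)
      hadj.symm hadj'.symm hw (hφe ▸ hw')]
  · obtain ⟨w, hew, -⟩ := hφ e he
    exact Sym2.mem_iff_exists.2 ⟨w, hew⟩

end SimpleGraph

/-- For every finite tree `S` with nonnegative edge costs, `c(S) ≤ p(S) ≤ 2·c(S)`. -/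
theorem stmt_0 {V : Type*} [Fintype V] (S : SimpleGraph V) (hS : S.IsTree)
    (c : Sym2 V → ℝ≥0) :
    setCost c S.edgeSet ≤ setPower c S.edgeSet ∧
      setPower c S.edgeSet ≤ 2 * setCost c S.edgeSet := by
  classical
  obtain ⟨φ, hinj, hφ⟩ := hS.exists_injOn_mem_edgeSet
  rw [← S.coe_edgeFinset] at hinj ⊢
  exact ⟨setCost_le_setPower_of_injOn c _ φ hinj (by simpa using hφ),
    setPower_le_two_mul_setCost c _⟩
end

section
/- For every integer i ≥ 0, the series ∑_{q=1}^∞ H_{q+i}/2^q converges and ∑_{q=1}^∞ H_{q+i}/2^q = 2^i·(2·ln 2 − ∑_{q=1}^i H_q/2^q). -/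
noncomputable def H (n : ℕ) : ℝ := ∑ j ∈ Finset.Icc 1 n, (1 : ℝ) / (j : ℝ)

/-!
The Cauchy product of `1 / (1 - x) = ∑ xⁿ` with `-log (1 - x) = ∑ xⁿ / n` is the generating
function `∑ Hₙ xⁿ = -log (1 - x) / (1 - x)` for `|x| < 1`. At `x = 1 / 2` it gives
`∑ Hₙ / 2ⁿ = 2 log 2`, and the series of the theorem is `2ⁱ` times the tail of this one
from index `i + 1`.
-/

open Finset

lemma sum_range_succ_eq_sum_Icc {M : Type*} [AddCommMonoid M] {f : ℕ → M} (hf : f 0 = 0) (n : ℕ) :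
    ∑ j ∈ range (n + 1), f j = ∑ j ∈ Icc 1 n, f j := by
  rw [range_eq_Ico, sum_eq_sum_Ico_succ_bot n.succ_pos, hf, zero_add, Nat.succ_eq_add_one,
    Ico_add_one_right_eq_Icc]

-- The extra `j = 0` term is `1 / 0 = 0`.
lemma H_eq_sum_range (n : ℕ) : H n = ∑ j ∈ range (n + 1), (1 : ℝ) / j := by
  rw [H, sum_range_succ_eq_sum_Icc (by simp)]

lemma hasSum_pow_div_natCast {x : ℝ} (hx : |x| < 1) :
    HasSum (fun n : ℕ => x ^ n / n) (-Real.log (1 - x)) := by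
  rw [← hasSum_nat_add_iff' 1]
  simpa using Real.hasSum_pow_div_log_of_abs_lt_one hx

lemma sum_range_pow_mul_pow_div (x : ℝ) (n : ℕ) :
    ∑ k ∈ range (n + 1), x ^ k * (x ^ (n - k) / (n - k : ℕ)) = H n * x ^ n := by
  have hterm : ∀ k ∈ range (n + 1), x ^ k * (x ^ (n - k) / (n - k : ℕ)) =
      x ^ n * (1 / (n - k : ℕ)) := by
    intro k hk
    rw [← mul_div_assoc, ← pow_add, Nat.add_sub_cancel' (Nat.lt_succ_iff.mp (mem_range.mp hk)),
      mul_one_div]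
  have hreflect := sum_range_reflect (fun j => (1 : ℝ) / j) (n + 1)
  rw [Nat.add_sub_cancel] at hreflect
  rw [sum_congr rfl hterm, ← mul_sum, hreflect, H_eq_sum_range, mul_comm]

theorem hasSum_H_mul_pow {x : ℝ} (hx : |x| < 1) :
    HasSum (fun n => H n * x ^ n) (-Real.log (1 - x) / (1 - x)) := by
  have hgeom : Summable fun n : ℕ => ‖x ^ n‖ := by
    simpa [norm_pow] using summable_geometric_of_lt_one (abs_nonneg x) hx
  have hlog : Summable fun n : ℕ => ‖x ^ n / n‖ := by
    refine hgeom.of_nonneg_of_le (fun n => norm_nonneg _) fun n => ?_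
    rw [norm_div, norm_pow]
    rcases n with _ | n
    · simp
    · exact div_le_self (by positivity) (le_abs.mpr (.inl (by simp)))
  have hprod := hasSum_sum_range_mul_of_summable_norm hgeom hlog
  rw [tsum_geometric_of_abs_lt_one hx, (hasSum_pow_div_natCast hx).tsum_eq] at hprod
  simpa only [sum_range_pow_mul_pow_div, inv_mul_eq_div] using hprod

lemma hasSum_H_div_two_pow : HasSum (fun n => H n / 2 ^ n) (2 * Real.log 2) := by
  have hsum : -Real.log (1 - 2⁻¹) / (1 - 2⁻¹) = 2 * Real.log 2 := by
    rw [show (1 : ℝ) - 2⁻¹ = 2⁻¹ by norm_num, Real.log_inv]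
    ring
  rw [← hsum]
  simpa only [inv_pow, div_eq_mul_inv] using hasSum_H_mul_pow (x := 2⁻¹) (by norm_num [abs_of_pos])

/-- For every integer `i ≥ 0`, the series `∑_{q=1}^∞ H_{q+i}/2^q` converges and its sum
equals `2^i · (2 ln 2 − ∑_{q=1}^i H_q/2^q)`. -/
theorem stmt_9 (i : ℕ) :
    HasSum (fun q : ℕ => H (q + 1 + i) / 2 ^ (q + 1))
      ((2 : ℝ) ^ i * (2 * Real.log 2 - ∑ q ∈ Finset.Icc 1 i, H q / 2 ^ q)) := by
  have htail := (hasSum_nat_add_iff' (i + 1)).mpr hasSum_H_div_two_pow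
  rw [sum_range_succ_eq_sum_Icc (by simp [H])] at htail
  have hterm : (fun q : ℕ => H (q + 1 + i) / 2 ^ (q + 1)) =
      fun q => 2 ^ i * (H (q + (i + 1)) / 2 ^ (q + (i + 1))) := by
    funext q
    rw [add_right_comm q 1 i, ← add_assoc]
    field_simp
    ring
  exact hterm ▸ htail.mul_left _
end

section
/- For every integer i ≥ 0, δ_{i+1} − δ_i = 1/((i+1)·2^{i+1}) + (1 − 1/2^{i+1})·∑_{q=1}^∞ 1/(2^q·(q+i+1)) + (1/2^{i+1})·(∑_{q=1}^∞ H_{q+i}/2^q − H_i). -/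
/-- `δ_i = (1/2^i)·H_i + (1 − 1/2^i)·∑_{q=1}^∞ H_{q+i}/2^q`. -/
noncomputable def δ (i : ℕ) : ℝ :=
  (1 / 2 ^ i) * H i + (1 - 1 / 2 ^ i) * ∑' q : ℕ, H (q + 1 + i) / 2 ^ (q + 1)

/-!
Passing from `i` to `i + 1` replaces each `H_{q+i}` by `H_{q+i} + 1/(q+i+1)`, so the series in
`δ_{i+1}` is the one in `δ_i` plus `∑_q 1/(2^q (q+i+1))`. With `H_{i+1} = H_i + 1/(i+1)` and
`1/2^i − 1/2^{i+1} = 1/2^{i+1}` the identity is then routine algebra.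
-/

lemma H_succ (n : ℕ) : H (n + 1) = H n + 1 / ((n : ℝ) + 1) := by
  rw [H, H, Finset.sum_Icc_succ_top (by omega)]
  push_cast
  ring

lemma H_nonneg (n : ℕ) : 0 ≤ H n :=
  Finset.sum_nonneg fun j _ => by positivity

lemma H_le_self (n : ℕ) : H n ≤ n := by
  calc H n ≤ ∑ _j ∈ Finset.Icc 1 n, (1 : ℝ) :=
        Finset.sum_le_sum fun j hj =>
          div_le_one_of_le₀ (by exact_mod_cast (Finset.mem_Icc.mp hj).1) (by positivity)
    _ = n := by simp

lemma summable_H_div_two_pow : Summable fun n : ℕ => H n / 2 ^ n := by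
  have hgeom : Summable fun n : ℕ => (n : ℝ) ^ 1 * (1 / 2 : ℝ) ^ n :=
    summable_pow_mul_geometric_of_norm_lt_one 1 (by norm_num)
  refine hgeom.of_nonneg_of_le (fun n => div_nonneg (H_nonneg n) (by positivity)) fun n => ?_
  rw [pow_one, div_pow, one_pow, ← div_eq_mul_one_div]
  gcongr
  exact H_le_self n

lemma summable_H_add_div_two_pow (i : ℕ) :
    Summable fun q : ℕ => H (q + 1 + i) / 2 ^ (q + 1) := by
  refine (((summable_nat_add_iff (i + 1)).mpr summable_H_div_two_pow).mul_left (2 ^ i)).congr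
    fun q => ?_
  rw [show q + (i + 1) = q + 1 + i by omega, pow_add]
  field_simp

lemma summable_one_div_two_pow_mul (i : ℕ) :
    Summable fun q : ℕ => 1 / (2 ^ (q + 1) * ((q : ℝ) + 1 + i + 1)) := by
  refine (summable_geometric_two.mul_left (1 / 2)).of_nonneg_of_le (fun q => by positivity)
    fun q => ?_
  calc 1 / (2 ^ (q + 1) * ((q : ℝ) + 1 + i + 1)) ≤ 1 / 2 ^ (q + 1) := by
        gcongr
        exact le_mul_of_one_le_right (by positivity) (le_add_of_nonneg_left (by positivity))
    _ = 1 / 2 * (1 / 2) ^ q := by rw [pow_succ, one_div_pow, one_div_mul_one_div, mul_comm]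

lemma tsum_H_add_succ (i : ℕ) :
    ∑' q : ℕ, H (q + 1 + (i + 1)) / 2 ^ (q + 1)
      = ∑' q : ℕ, H (q + 1 + i) / 2 ^ (q + 1)
        + ∑' q : ℕ, 1 / (2 ^ (q + 1) * ((q : ℝ) + 1 + i + 1)) := by
  rw [← (summable_H_add_div_two_pow i).tsum_add (summable_one_div_two_pow_mul i)]
  refine tsum_congr fun q => ?_
  rw [← add_assoc, H_succ]
  push_cast
  field_simp

/-- For every integer `i ≥ 0`,
`δ_{i+1} − δ_i = 1/((i+1) 2^{i+1}) + (1 − 1/2^{i+1}) ∑_{q=1}^∞ 1/(2^q (q+i+1))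
  + (1/2^{i+1}) (∑_{q=1}^∞ H_{q+i}/2^q − H_i)`. -/
theorem stmt_15 (i : ℕ) :
    δ (i + 1) - δ i
      = 1 / (((i : ℝ) + 1) * 2 ^ (i + 1))
        + (1 - 1 / 2 ^ (i + 1)) * ∑' q : ℕ, 1 / (2 ^ (q + 1) * ((q : ℝ) + 1 + (i : ℝ) + 1))
        + (1 / 2 ^ (i + 1)) * ((∑' q : ℕ, H (q + 1 + i) / 2 ^ (q + 1)) - H i) := by
  rw [δ, δ, tsum_H_add_succ, H_succ, pow_succ]
  field_simp
  ring
end
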